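/- arXiv:2102.04007 — 6 statements merged into one kernel-verified Lean document; each statement's English description precedes it below -/
import Mathlib

section
/- Let $n\ge 1$ and let $m_1,\dots,m_n$ be nonnegative integers. The number of permutations $\sigma\in S_n$ such that for every $i\in\{1,\dots,n\}$ the cycle decomposition of $\sigma$ contains at least $m_i$ cycles of length $i$ (where cycles of length $1$ are fixed points) is at most $n!\cdot\prod_{i=1}^{n}\frac{1}{i^{m_i}\,m_i!}$. Equivalently, the probability that a uniformly random permutation of $S_n$ contains at least $m_i$ cycles of length $i$ for each $i$ is at most $\prod_{i=1}^{n}\frac{1}{i^{m_i}\,m_i!}$. -/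
/-- The number of cycles of length `i` in the cycle decomposition of `σ`
(cycles of length `1` being fixed points). -/
def cycleCount {n : ℕ} (σ : Equiv.Perm (Fin n)) (i : ℕ) : ℕ :=
  if i = 1 then (Finset.univ.filter fun x => σ x = x).card
  else σ.cycleType.count i

/-!
Let `τ` be a permutation of a set of `K = ∑ i mᵢ` points made of `mᵢ` disjoint `i`-cycles
for each `i`. If `σ ∈ Sₙ` has at least `mᵢ` cycles of length `i` for every `i`, then some
embedding `w` of the points of `τ` satisfies `σ ∘ w = w ∘ τ`, and precomposing `w` with the
centralizer of `τ`, of order `∏ i^{mᵢ} mᵢ!`, gives as many such embeddings. On the other hand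
each of the `n!/(n-K)!` embeddings `w` is compatible with at most `(n-K)!` permutations `σ`,
as `σ` is determined by `w` on the image of `w`. Double counting the pairs `(σ, w)` gives
`#{σ} ⋅ ∏ i^{mᵢ} mᵢ! ≤ n!`.
-/

open Equiv Function Finset Fintype
open scoped Nat

theorem val_finRotate {k : ℕ} (o : Fin k) : (finRotate k o : ℕ) = (o + 1) % k := by
  have := o.neZero
  rw [finRotate_apply, Fin.val_add, Fin.val_one', Nat.add_mod_mod]

namespace Equiv.Perm

variable {α β ι : Type*}

theorem SameCycle.minimalPeriod_eq [Finite α] {σ : Perm α} {x y : α} (h : σ.SameCycle x y) :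
    minimalPeriod σ x = minimalPeriod σ y := by
  obtain ⟨k, rfl⟩ := h.exists_nat_pow_eq
  rw [← iterate_eq_pow, minimalPeriod_apply_iterate (σ.injective.mem_periodicPts x)]

theorem minimalPeriod_eq_card_support_cycleOf [Fintype α] [DecidableEq α] (σ : Perm α) {x : α}
    (hx : σ x ≠ x) : minimalPeriod σ x = #(σ.cycleOf x).support := by
  have hcycle : (σ.cycleOf x).IsCycle := isCycle_cycleOf σ hx
  have hperiodic (k : ℕ) : IsPeriodicPt σ k x ↔ #(σ.cycleOf x).support ∣ k := by
    rw [← hcycle.orderOf, orderOf_dvd_iff_pow_eq_one,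
      hcycle.pow_eq_one_iff' (by rwa [cycleOf_apply_self]), cycleOf_pow_apply_self,
      IsPeriodicPt, IsFixedPt, iterate_eq_pow]
  exact Nat.dvd_antisymm (IsPeriodicPt.minimalPeriod_dvd ((hperiodic _).2 dvd_rfl))
    ((hperiodic _).1 (isPeriodicPt_minimalPeriod σ x))

/-- `m i` disjoint cycles of length `ℓ i` for each `i`. -/
def cycleModel (m ℓ : ι → ℕ) : Perm (Σ i, Fin (m i) × Fin (ℓ i)) :=
  sigmaCongrRight fun i => prodCongr (Equiv.refl _) (finRotate (ℓ i))

section CycleModel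

variable {m ℓ : ι → ℕ}

theorem exists_embedding_semiconj_cycleModel (σ : Perm α) (b : (Σ i, Fin (m i)) → α)
    (hper : ∀ x, minimalPeriod σ (b x) = ℓ x.1)
    (hb : ∀ x y, σ.SameCycle (b x) (b y) → x = y) :
    ∃ w : (Σ i, Fin (m i) × Fin (ℓ i)) ↪ α, Semiconj w (cycleModel m ℓ) σ := by
  let w (q : Σ i, Fin (m i) × Fin (ℓ i)) : α := (σ ^ (q.2.2 : ℕ)) (b ⟨q.1, q.2.1⟩)
  have hw : Injective w := by
    rintro ⟨i, j, o⟩ ⟨i', j', o'⟩ h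
    have hsame : σ.SameCycle (b ⟨i, j⟩) (b ⟨i', j'⟩) := by
      have : σ.SameCycle (b ⟨i, j⟩) (w ⟨i', j', o'⟩) :=
        h ▸ sameCycle_pow_right.2 (.refl _ _)
      exact sameCycle_pow_right.1 this
    obtain ⟨rfl, hj⟩ := Sigma.mk.inj_iff.1 (hb _ _ hsame)
    obtain rfl := eq_of_heq hj
    have ho : (o : ℕ) = o' := by
      refine iterate_injOn_Iio_minimalPeriod (f := σ) ?_ ?_
        (by simpa [w, ← iterate_eq_pow] using h)
      · simp [hper, o.isLt]
      · simp [hper, o'.isLt]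
    rw [Fin.ext ho]
  refine ⟨⟨w, hw⟩, ?_⟩
  rintro ⟨i, j, o⟩
  calc (σ ^ (finRotate (ℓ i) o : ℕ)) (b ⟨i, j⟩)
      = σ^[((o : ℕ) + 1) % minimalPeriod σ (b ⟨i, j⟩)] (b ⟨i, j⟩) := by
        rw [val_finRotate, hper, iterate_eq_pow]
    _ = σ ((σ ^ (o : ℕ)) (b ⟨i, j⟩)) := by
        rw [iterate_mod_minimalPeriod_eq, iterate_succ_apply', iterate_eq_pow]

variable (m ℓ)

theorem prod_pow_mul_factorial_le_card_centralizer_cycleModel [Fintype ι] [DecidableEq ι]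
    [∀ i, NeZero (ℓ i)] :
    ∏ i, ℓ i ^ m i * (m i)! ≤ Nat.card (Subgroup.centralizer {cycleModel m ℓ}) := by
  let shift (e : ∀ i, (Fin (m i) → Fin (ℓ i)) × Perm (Fin (m i))) :
      Perm (Σ i, Fin (m i) × Fin (ℓ i)) :=
    sigmaCongrRight fun i => prodShear (e i).2 fun j => Equiv.addRight ((e i).1 j)
  have hmem e : shift e ∈ Subgroup.centralizer {cycleModel m ℓ} := by
    rw [Subgroup.mem_centralizer_singleton_iff]
    refine Equiv.ext fun ⟨i, j, o⟩ => ?_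
    simp [shift, cycleModel, finRotate_apply, add_right_comm]
  have hinj :
      Injective fun e => (⟨shift e, hmem e⟩ : Subgroup.centralizer {cycleModel m ℓ}) := by
    intro e e' h
    have h' (i : ι) (j : Fin (m i)) : (e i).2 j = (e' i).2 j ∧ (e i).1 j = (e' i).1 j := by
      simpa [shift] using congrArg (fun g : Subgroup.centralizer {cycleModel m ℓ} =>
        (g : Perm (Σ i, Fin (m i) × Fin (ℓ i))) ⟨i, j, 0⟩) h
    exact funext fun i => Prod.ext (funext fun j => (h' i j).2) (Equiv.ext fun j => (h' i j).1)
  calc ∏ i, ℓ i ^ m i * (m i)!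
      = Nat.card (∀ i, (Fin (m i) → Fin (ℓ i)) × Perm (Fin (m i))) := by
        simp [Nat.card_eq_fintype_card, Fintype.card_pi, Fintype.card_perm]
    _ ≤ _ := Nat.card_le_card_of_injective _ hinj

end CycleModel

theorem card_semiconj_le [Fintype α] [Fintype β] (τ : Perm β) (w : β ↪ α) :
    Nat.card {σ : Perm α // Semiconj w τ σ} ≤ (card α - card β)! := by
  have hrange (σ : {σ : Perm α // Semiconj w τ σ}) (x : α) :
      σ.1 x ∈ Set.range w ↔ x ∈ Set.range w := by
    constructor
    · rintro ⟨q, hq⟩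
      exact ⟨τ.symm q, σ.1.injective (by rw [← σ.2, apply_symm_apply, hq])⟩
    · rintro ⟨q, rfl⟩
      exact ⟨τ q, σ.2 q⟩
  let restrict (σ : {σ : Perm α // Semiconj w τ σ}) : Perm {x // x ∉ Set.range w} :=
    σ.1.subtypePerm fun x => not_congr (hrange σ x)
  have hinj : Injective restrict := by
    intro σ₁ σ₂ h
    refine Subtype.ext (Equiv.ext fun x => ?_)
    by_cases hx : x ∈ Set.range w
    · obtain ⟨q, rfl⟩ := hx
      rw [← σ₁.2, ← σ₂.2]
    · exact congrArg Subtype.val (Equiv.ext_iff.1 h ⟨x, hx⟩)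
  calc Nat.card {σ : Perm α // Semiconj w τ σ}
      ≤ Nat.card (Perm {x // x ∉ Set.range w}) := Nat.card_le_card_of_injective _ hinj
    _ = (card α - card β)! := by
      classical
      rw [Nat.card_perm, Nat.card_eq_fintype_card, Fintype.card_subtype_compl,
        Set.card_range_of_injective w.injective]

theorem card_centralizer_le_card_semiconj [Finite α] {τ : Perm β} {σ : Perm α}
    {w₀ : β ↪ α} (hw₀ : Semiconj w₀ τ σ) :
    Nat.card (Subgroup.centralizer {τ}) ≤ Nat.card {w : β ↪ α // Semiconj w τ σ} := by
  have hcomm (g : Subgroup.centralizer {τ}) : Semiconj (g : Perm β) τ τ := fun x =>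
    congrArg (· x) (Subgroup.mem_centralizer_singleton_iff.1 g.2)
  refine Nat.card_le_card_of_injective
    (fun g => ⟨(g : Perm β).toEmbedding.trans w₀, hw₀.comp_left (hcomm g)⟩) ?_
  intro g g' h
  exact Subtype.ext (Equiv.ext fun x => w₀.injective (congrArg (fun w => w.1 x) h))

theorem card_exists_semiconj_mul_card_centralizer_le [Fintype α] [Fintype β]
    (τ : Perm β) :
    Nat.card {σ : Perm α // ∃ w : β ↪ α, Semiconj w τ σ} *
      Nat.card (Subgroup.centralizer {τ}) ≤ (card α)! := by
  classical
  have hdouble := card_mul_le_card_mul (fun (σ : Perm α) (w : β ↪ α) => Semiconj w τ σ)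
    (s := univ.filter fun σ => ∃ w : β ↪ α, Semiconj w τ σ) (t := univ)
    (m := Nat.card (Subgroup.centralizer {τ})) (n := (card α - card β)!)
    (fun σ hσ => by
      obtain ⟨w₀, hw₀⟩ := (mem_filter.1 hσ).2
      simpa [bipartiteAbove, Nat.card_eq_fintype_card, Fintype.card_subtype]
        using card_centralizer_le_card_semiconj hw₀)
    (fun w _ => (card_le_card (filter_subset_filter _ (filter_subset _ _))).trans
      (by simpa [Nat.card_eq_fintype_card, Fintype.card_subtype] using card_semiconj_le τ w))
  have hfact : card (β ↪ α) * (card α - card β)! ≤ (card α)! := by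
    rw [Fintype.card_embedding_eq, mul_comm]
    rcases le_or_gt (card β) (card α) with h | h
    · exact (Nat.factorial_mul_descFactorial h).le
    · simp [Nat.descFactorial_eq_zero_iff_lt.2 h]
  rw [Nat.card_eq_fintype_card, Fintype.card_subtype]
  exact hdouble.trans (by simpa using hfact)

end Equiv.Perm

open Equiv.Perm

theorem exists_cycleCount_representatives {n : ℕ} (σ : Perm (Fin n)) (i : ℕ) :
    ∃ b : Fin (cycleCount σ i) → Fin n,
      (∀ j, minimalPeriod σ (b j) = i) ∧ ∀ j j', σ.SameCycle (b j) (b j') → j = j' := by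
  rcases eq_or_ne i 1 with rfl | hi1
  · let e := (univ.filter fun x => σ x = x).equivFin.symm
    have hfixed j : σ (e j) = e j := (mem_filter.1 (e j).2).2
    exact ⟨fun j => e j, fun j => minimalPeriod_eq_one_iff_isFixedPt.2 (hfixed j),
      fun j j' h => e.injective (Subtype.ext (h.eq_of_left (hfixed j)))⟩
  · obtain ⟨a⟩ := Basis.nonempty σ
    let e := (Fintype.equivFinOfCardEq (CycleType.count_def (σ := σ) i).symm).symm
    have hper (c : σ.cycleFactorsFinset) : minimalPeriod σ (a c) = #c.1.support := by
      rw [minimalPeriod_eq_card_support_cycleOf σ (mem_support.1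
        (mem_cycleFactorsFinset_support_le c.2 (a.mem_support_self c))), a.cycleOf_eq]
    rw [cycleCount, if_neg hi1]
    refine ⟨fun j => a (e j).1, fun j => (hper _).trans (e j).2, fun j j' h => ?_⟩
    exact e.injective (Subtype.ext (Subtype.ext
      ((a.cycleOf_eq _).symm.trans (h.cycleOf_eq.trans (a.cycleOf_eq _)))))

theorem exists_embedding_semiconj_cycleModel_of_le_cycleCount {n : ℕ} {m : ℕ → ℕ}
    {σ : Perm (Fin n)} (hσ : ∀ i ∈ Icc 1 n, m i ≤ cycleCount σ i) :
    ∃ w : (Σ i : Icc 1 n, Fin (m i) × Fin i) ↪ Fin n,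
      Semiconj w (cycleModel (fun i : Icc 1 n => m i) (fun i => i)) σ := by
  choose b hper hb using fun i : Icc 1 n => exists_cycleCount_representatives σ i
  refine exists_embedding_semiconj_cycleModel σ (fun x => b x.1 (Fin.castLE (hσ _ x.1.2) x.2))
    (fun x => hper _ _) ?_
  rintro ⟨i, j⟩ ⟨i', j'⟩ h
  obtain rfl : i = i' := Subtype.ext ((hper _ _).symm.trans (h.minimalPeriod_eq.trans (hper _ _)))
  obtain rfl := Fin.castLE_injective _ (hb i _ _ h)
  rfl

theorem card_perms_with_prescribed_cycles_le_general (n : ℕ) (m : ℕ → ℕ) :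
    (Nat.card {σ : Equiv.Perm (Fin n) // ∀ i ∈ Finset.Icc 1 n, m i ≤ cycleCount σ i} : ℝ)
      ≤ (n.factorial : ℝ) *
        ∏ i ∈ Finset.Icc 1 n, (1 : ℝ) / ((i : ℝ) ^ m i * ((m i).factorial : ℝ)) := by
  have (i : Icc 1 n) : NeZero (i : ℕ) := ⟨Nat.one_le_iff_ne_zero.1 (mem_Icc.1 i.2).1⟩
  let τ := cycleModel (fun i : Icc 1 n => m i) (fun i => (i : ℕ))
  set P := ∏ i ∈ Icc 1 n, i ^ m i * (m i)!
  have hP : 0 < P := prod_pos fun i hi => by have := (mem_Icc.1 hi).1; positivity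
  have hcent : P ≤ Nat.card (Subgroup.centralizer {τ}) :=
    (prod_coe_sort (Icc 1 n) fun i => i ^ m i * (m i)!).symm.trans_le
      (prod_pow_mul_factorial_le_card_centralizer_cycleModel _ _)
  have hsub : Nat.card {σ : Perm (Fin n) // ∀ i ∈ Icc 1 n, m i ≤ cycleCount σ i}
      ≤ Nat.card {σ : Perm (Fin n) // ∃ w : (Σ i : Icc 1 n, Fin (m i) × Fin i) ↪ Fin n,
          Semiconj w τ σ} :=
    Nat.card_le_card_of_injective
      (Subtype.map id fun _ => exists_embedding_semiconj_cycleModel_of_le_cycleCount)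
      (Subtype.map_injective _ injective_id)
  have hcount :
      Nat.card {σ : Perm (Fin n) // ∀ i ∈ Icc 1 n, m i ≤ cycleCount σ i} * P ≤ n ! :=
    (Nat.mul_le_mul hsub hcent).trans
      (by simpa using card_exists_semiconj_mul_card_centralizer_le (α := Fin n) τ)
  have hprod :
      ∏ i ∈ Icc 1 n, (1 : ℝ) / ((i : ℝ) ^ m i * ((m i)! : ℝ)) = 1 / (P : ℝ) := by
    simp only [P, one_div, Nat.cast_prod, Nat.cast_mul, Nat.cast_pow, prod_inv_distrib]
  rw [hprod, mul_one_div, le_div_iff₀ (by exact_mod_cast hP)]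
  exact_mod_cast hcount

/-- The number of permutations `σ ∈ Sₙ` containing, for each `i ∈ {1, …, n}`, at least
`mᵢ` cycles of length `i`, is at most `n! ⬝ ∏ᵢ 1/(i^{mᵢ} mᵢ!)`. -/
theorem card_perms_with_prescribed_cycles_le (n : ℕ) (hn : 1 ≤ n) (m : ℕ → ℕ) :
    (Nat.card {σ : Equiv.Perm (Fin n) // ∀ i ∈ Finset.Icc 1 n, m i ≤ cycleCount σ i} : ℝ)
      ≤ (n.factorial : ℝ) *
        ∏ i ∈ Finset.Icc 1 n, (1 : ℝ) / ((i : ℝ) ^ m i * ((m i).factorial : ℝ)) :=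
  card_perms_with_prescribed_cycles_le_general n m
end

section
/- There exists a constant $C>0$ such that for all $n\ge 2$, the proportion of permutations $\sigma\in S_n$ whose cycle decomposition contains a cycle of prime length $p$ with $p> n/2$ is at most $C/\log n$. -/
open Finset Real Chebyshev
open scoped Nat

namespace Equiv.Perm

variable {α : Type*} [Fintype α] [DecidableEq α]

theorem card_filter_forall_mem_apply_eq (s : Finset α) :
    #{f : Perm α | ∀ a ∈ s, f a = a} = (Fintype.card α - #s)! := by
  have e : {f : Perm α // ∀ a ∈ s, f a = a} ≃ Perm {a // a ∉ s} :=
    (subtypeEquivRight fun f => by simp).trans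
      (Perm.subtypeEquivSubtypePerm fun a => a ∉ s).symm
  rw [← Fintype.card_subtype, Fintype.card_congr e, Fintype.card_perm,
    Fintype.card_subtype_compl, Fintype.card_coe]

theorem card_filter_mem_cycleFactorsFinset_le (c : Perm α) :
    #{σ : Perm α | c ∈ σ.cycleFactorsFinset} ≤ (Fintype.card α - #c.support)! := by
  rw [← card_filter_forall_mem_apply_eq]
  refine card_le_card_of_injOn (· * c⁻¹) (fun σ hσ => ?_) fun σ _ τ _ h => mul_right_cancel h
  simp only [coe_filter, mem_univ, true_and, Set.mem_ofPred_eq] at hσ ⊢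
  intro a ha
  have hc : c (c⁻¹ a) = σ (c⁻¹ a) :=
    (mem_cycleFactorsFinset_iff.1 hσ).2 _ (apply_mem_support.1 (by simpa using ha))
  simpa [eq_comm] using hc

theorem mul_card_filter_mem_cycleType_le (k : ℕ) :
    k * #{σ : Perm α | k ∈ σ.cycleType} ≤ (Fintype.card α)! := by
  set cycles : Finset (Perm α) := {c | c.cycleType = {k}}
  have hsupport : ∀ c ∈ cycles, #c.support = k := fun c hc => by
    simpa using (sum_cycleType c).symm.trans (congrArg Multiset.sum (mem_filter.1 hc).2)
  have hcover : ({σ | k ∈ σ.cycleType} : Finset (Perm α)) ⊆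
      cycles.biUnion fun c => {σ : Perm α | c ∈ σ.cycleFactorsFinset} := by
    intro σ hσ
    rw [mem_filter, cycleType_def, Multiset.mem_map] at hσ
    obtain ⟨-, c, hc, rfl⟩ := hσ
    refine mem_biUnion.2 ⟨c, mem_filter.2 ⟨mem_univ _, ?_⟩, mem_filter.2 ⟨mem_univ _, hc⟩⟩
    exact (mem_cycleFactorsFinset_iff.1 hc).1.cycleType
  have hcount : #{σ : Perm α | k ∈ σ.cycleType} ≤ #cycles * (Fintype.card α - k)! :=
    (card_le_card hcover).trans <| card_biUnion_le_card_mul _ _ _ fun c hc =>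
      hsupport c hc ▸ card_filter_mem_cycleFactorsFinset_le c
  have hcycles : #cycles * ((Fintype.card α - k)! * k) ≤ (Fintype.card α)! := by
    simpa using (card_of_cycleType_mul_eq α {k}).le.trans (by split_ifs <;> simp)
  calc k * #{σ : Perm α | k ∈ σ.cycleType} ≤ k * (#cycles * (Fintype.card α - k)!) :=
        Nat.mul_le_mul_left k hcount
    _ = #cycles * ((Fintype.card α - k)! * k) := by ring
    _ ≤ (Fintype.card α)! := hcycles

theorem card_filter_mem_cycleType_div_factorial_le {k : ℕ} (hk : 0 < k) :
    (#{σ : Perm α | k ∈ σ.cycleType} : ℝ) / (Fintype.card α)! ≤ (k : ℝ)⁻¹ := by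
  rw [div_le_iff₀ (by positivity), inv_mul_eq_div, le_div_iff₀ (by positivity), mul_comm]
  exact_mod_cast mul_card_filter_mem_cycleType_le k

end Equiv.Perm

theorem one_le_cycleCount_iff {n i : ℕ} {σ : Equiv.Perm (Fin n)} (hi : i ≠ 1) :
    1 ≤ cycleCount σ i ↔ i ∈ σ.cycleType := by
  rw [cycleCount, if_neg hi, Multiset.one_le_count_iff_mem]

theorem inv_mul_log_le_of_lt_two_mul {n p : ℕ} (hp : p.Prime) (hnp : n < 2 * p) :
    (p : ℝ)⁻¹ * log n ≤ 4 * log p / n := by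
  rcases n.eq_zero_or_pos with rfl | hn
  · simp
  have hp2 : (2 : ℝ) ≤ p := by exact_mod_cast hp.two_le
  have hnp' : (n : ℝ) ≤ 2 * p := by exact_mod_cast hnp.le
  have hn' : (1 : ℝ) ≤ n := by exact_mod_cast hn
  have hlog : log n ≤ 2 * log p :=
    calc log n ≤ log (p ^ 2) := log_le_log (by positivity) (by nlinarith)
      _ = 2 * log p := by rw [log_pow]; norm_num
  rw [le_div_iff₀ (by positivity), inv_mul_eq_div, div_mul_eq_mul_div, div_le_iff₀ (by positivity)]
  nlinarith [log_nonneg hn', log_nonneg (one_le_two.trans hp2)]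

theorem sum_inv_primes_gt_half_mul_log_le (n : ℕ) :
    (∑ p ∈ n.primesLE with n < 2 * p, (p : ℝ)⁻¹) * log n ≤ 4 * log 4 := by
  calc (∑ p ∈ n.primesLE with n < 2 * p, (p : ℝ)⁻¹) * log n
      ≤ ∑ p ∈ n.primesLE with n < 2 * p, 4 * log p / n := by
        rw [sum_mul]
        exact sum_le_sum fun p hp => (mem_filter.1 hp).elim fun hp hnp =>
          inv_mul_log_le_of_lt_two_mul (Nat.prime_of_mem_primesLE hp) hnp
    _ ≤ ∑ p ∈ n.primesLE, 4 * log p / n :=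
        sum_le_sum_of_subset_of_nonneg (filter_subset _ _) fun p _ _ =>
          div_nonneg (mul_nonneg (by norm_num) (log_natCast_nonneg p)) n.cast_nonneg
    _ = 4 * θ n / n := by rw [← sum_div, ← mul_sum, theta_eq_sum_primesLE_log]
    _ ≤ 4 * log 4 := by
        rcases n.eq_zero_or_pos with rfl | hn
        · simpa using log_nonneg (by norm_num)
        rw [div_le_iff₀ (by positivity), mul_assoc]
        exact mul_le_mul_of_nonneg_left (theta_le_log4_mul_x n.cast_nonneg) (by norm_num)

open Classical in
theorem card_filter_exists_large_prime_cycle_le (n : ℕ) :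
    #{σ : Equiv.Perm (Fin n) | ∃ p : ℕ, p.Prime ∧ n < 2 * p ∧ 1 ≤ cycleCount σ p} ≤
      ∑ p ∈ n.primesLE with n < 2 * p, #{σ : Equiv.Perm (Fin n) | p ∈ σ.cycleType} := by
  refine (card_le_card fun σ hσ => ?_).trans card_biUnion_le
  obtain ⟨p, hp, hnp, hσp⟩ := (mem_filter.1 hσ).2
  rw [one_le_cycleCount_iff hp.one_lt.ne'] at hσp
  have hpn : p ≤ n := by
    simpa using (Equiv.Perm.le_card_support_of_mem_cycleType hσp).trans (card_le_univ _)
  exact mem_biUnion.2 ⟨p, mem_filter.2 ⟨Nat.mem_primesLE.2 ⟨hpn, hp⟩, hnp⟩,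
    mem_filter.2 ⟨mem_univ _, hσp⟩⟩

/-- There is a constant `C > 0` such that for all `n ≥ 2`, the proportion of `σ ∈ Sₙ`
containing a cycle of prime length `p > n/2` is at most `C / log n`. -/
theorem proportion_perms_with_large_prime_cycle_le :
    ∃ C : ℝ, 0 < C ∧ ∀ n : ℕ, 2 ≤ n →
      (Nat.card {σ : Equiv.Perm (Fin n) //
          ∃ p : ℕ, p.Prime ∧ n < 2 * p ∧ 1 ≤ cycleCount σ p} : ℝ) / (n.factorial : ℝ)
        ≤ C / Real.log n := by
  classical
  refine ⟨4 * log 4, by positivity, fun n hn => ?_⟩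
  have hproportion : (Nat.card {σ : Equiv.Perm (Fin n) //
      ∃ p : ℕ, p.Prime ∧ n < 2 * p ∧ 1 ≤ cycleCount σ p} : ℝ) / n ! ≤
      ∑ p ∈ n.primesLE with n < 2 * p, (p : ℝ)⁻¹ := by
    rw [Nat.card_eq_fintype_card, Fintype.card_subtype]
    calc _ ≤ ∑ p ∈ n.primesLE with n < 2 * p,
          (#{σ : Equiv.Perm (Fin n) | p ∈ σ.cycleType} : ℝ) / n ! := by
          rw [← sum_div]
          gcongr
          exact_mod_cast card_filter_exists_large_prime_cycle_le n
      _ ≤ _ := sum_le_sum fun p hp => by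
          simpa using Equiv.Perm.card_filter_mem_cycleType_div_factorial_le (α := Fin n)
            (Nat.prime_of_mem_primesLE (mem_filter.1 hp).1).pos
  rw [le_div_iff₀ (log_pos (by exact_mod_cast hn))]
  exact (mul_le_mul_of_nonneg_right hproportion (log_natCast_nonneg n)).trans
    (sum_inv_primes_gt_half_mul_log_le n)
end

section
/- Let $n\ge 2$ and let $G\le S_n$ be a subgroup which is solvable and whose natural action on $\{1,\dots,n\}$ is primitive. Then $n$ is a prime power. -/
/-- A subgroup of `Sₙ` is primitive if its natural action on `{1, …, n}` is transitive
and every block of the action is trivial (a subsingleton or everything). -/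
def Subgroup.IsPrimitivePerm {n : ℕ} (G : Subgroup (Equiv.Perm (Fin n))) : Prop :=
  MulAction.IsPretransitive G (Fin n) ∧
    ∀ B : Set (Fin n), MulAction.IsBlock G B → B.Subsingleton ∨ B = Set.univ

open MulAction in
/-- A nontrivial commutative normal subgroup of a primitive subgroup of `Sₙ` acts
regularly, hence has cardinality `n`. -/
private lemma aux_card_eq {n : ℕ} {G : Subgroup (Equiv.Perm (Fin n))}
    (hprim : G.IsPrimitivePerm) (N : Subgroup G) [N.Normal] (hNbot : N ≠ ⊥)
    (hcomm : ∀ x y : G, x ∈ N → y ∈ N → x * y = y * x) : Nat.card N = n := by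
  obtain ⟨g, hg1⟩ := Subgroup.ne_bot_iff_exists_ne_one.mp hNbot
  have hsmul : ∀ (h : N) (b : Fin n), h • b = ((h : G) : Equiv.Perm (Fin n)) b := fun _ _ => rfl
  have hgperm : ((g : G) : Equiv.Perm (Fin n)) ≠ 1 := by
    intro h
    apply hg1
    have : (g : G) = 1 := by
      apply Subtype.ext; exact h
    exact Subtype.ext this
  have hmove : ∃ a : Fin n, ((g : G) : Equiv.Perm (Fin n)) a ≠ a := by
    by_contra h
    push_neg at h
    exact hgperm (Equiv.ext h)
  obtain ⟨a, ha⟩ := hmove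
  have horb : orbit N a = Set.univ := by
    rcases hprim.2 (orbit N a) (IsBlock.orbit_of_normal a) with hsub | huniv
    · exfalso
      have h2 : g • a ∈ orbit N a := mem_orbit a g
      have := hsub h2 (mem_orbit_self a)
      rw [hsmul] at this
      exact ha this
    · exact huniv
  have hstab : stabilizer N a = ⊥ := by
    rw [eq_bot_iff]
    intro s hs
    have hsa : s • a = a := hs
    have hfix : ∀ b : Fin n, s • b = b := by
      intro b
      have hb : b ∈ orbit N a := horb ▸ Set.mem_univ b
      obtain ⟨h, rfl⟩ := hb
      have hc : s * h = h * s := Subtype.ext (hcomm _ _ s.2 h.2)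
      rw [smul_smul, hc, mul_smul, hsa]
    have hperm : ((s : G) : Equiv.Perm (Fin n)) = 1 := by
      apply Equiv.ext
      intro b
      have := hfix b
      rw [hsmul] at this
      exact this
    rw [Subgroup.mem_bot]
    exact Subtype.ext (Subtype.ext hperm)
  have e2 : (N ⧸ stabilizer N a) ≃ N := by
    rw [hstab]
    exact QuotientGroup.quotientBot.toEquiv
  have e1 : Fin n ≃ N :=
    ((Equiv.Set.univ (Fin n)).symm.trans (Equiv.setCongr horb.symm)).trans
      ((orbitEquivQuotientStabilizer N a).trans e2)
  rw [← Nat.card_congr e1, Nat.card_eq_fintype_card, Fintype.card_fin]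

/-- If `n ≥ 2` and `G ≤ Sₙ` is solvable and primitive, then `n` is a prime power. -/
theorem isPrimePow_of_solvable_primitive (n : ℕ) (hn : 2 ≤ n)
    (G : Subgroup (Equiv.Perm (Fin n))) (hsolv : IsSolvable G)
    (hprim : G.IsPrimitivePerm) : IsPrimePow n := by
  classical
  have h01 : (⟨0, by omega⟩ : Fin n) ≠ ⟨1, by omega⟩ := by simp [Fin.ext_iff]
  haveI : Nontrivial G := by
    obtain ⟨g, hg⟩ := hprim.1.exists_smul_eq (⟨0, by omega⟩ : Fin n) ⟨1, by omega⟩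
    refine ⟨g, 1, fun h => h01 ?_⟩
    rw [h, one_smul] at hg
    exact hg
  obtain ⟨m, hm⟩ := (isSolvable_def _).mp hsolv
  have hex : ∃ i, derivedSeries G i = ⊥ := ⟨m, hm⟩
  set k := Nat.find hex with hk
  have hk0 : k ≠ 0 := by
    intro h
    have := Nat.find_spec hex
    rw [← hk, h, derivedSeries_zero] at this
    obtain ⟨x, y, hxy⟩ := exists_pair_ne G
    apply hxy
    have hx : x ∈ (⊥ : Subgroup G) := this ▸ Subgroup.mem_top x
    have hy : y ∈ (⊥ : Subgroup G) := this ▸ Subgroup.mem_top y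
    rw [Subgroup.mem_bot] at hx hy
    rw [hx, hy]
  set N := derivedSeries G (k - 1) with hN
  have hNbot : N ≠ ⊥ := Nat.find_min hex (by omega)
  have hNsucc : ⁅N, N⁆ = ⊥ := by
    have h1 : k - 1 + 1 = k := by omega
    have := Nat.find_spec hex
    rw [← hk] at this
    rw [hN, ← derivedSeries_succ, h1]
    exact this
  haveI hNnorm : N.Normal := derivedSeries_normal _ _
  have hcommN : ∀ x y : G, x ∈ N → y ∈ N → x * y = y * x := by
    intro x y hx hy
    have hcen := Subgroup.commutator_eq_bot_iff_le_centralizer.mp hNsucc hy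
    exact (Subgroup.mem_centralizer_iff.mp hcen x hx)
  have hcardN : Nat.card N = n := aux_card_eq hprim N hNbot hcommN
  set p := n.minFac with hpdef
  have hp : p.Prime := Nat.minFac_prime (by omega)
  haveI : Fact p.Prime := ⟨hp⟩
  obtain ⟨P⟩ : Nonempty (Sylow p N) := inferInstance
  have hPnorm : (P : Subgroup N).Normal := by
    constructor
    intro x hx g
    have hgx : g * x = x * g := Subtype.ext (hcommN _ _ g.2 x.2)
    have : g * x * g⁻¹ = x := by rw [hgx, mul_inv_cancel_right]
    rw [this]
    exact hx
  haveI := Sylow.characteristic_of_normal P hPnorm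
  set Q := (P : Subgroup N).map N.subtype with hQ
  haveI hQnorm : Q.Normal := inferInstance
  have hcardQ : Nat.card Q = Nat.card P :=
    Nat.card_congr (Subgroup.equivMapOfInjective _ _ N.subtype_injective).toEquiv.symm
  have hcardP : Nat.card P = p ^ (Nat.card N).factorization p := P.card_eq_multiplicity
  have hdvd : p ∣ Nat.card N := by rw [hcardN]; exact Nat.minFac_dvd n
  have hpos : 0 < (Nat.card N).factorization p :=
    Nat.Prime.factorization_pos_of_dvd hp (by rw [hcardN]; omega) hdvd
  have hQbot : Q ≠ ⊥ := by
    intro h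
    rw [h] at hcardQ
    rw [Subgroup.card_bot, hcardP] at hcardQ
    have := Nat.one_lt_pow hpos.ne' hp.one_lt
    omega
  have hcommQ : ∀ x y : G, x ∈ Q → y ∈ Q → x * y = y * x := by
    intro x y hx hy
    exact hcommN x y (Subgroup.map_subtype_le _ hx) (Subgroup.map_subtype_le _ hy)
  have hcard : Nat.card Q = n := aux_card_eq hprim Q hQbot hcommQ
  rw [hcardQ, hcardP] at hcard
  exact ⟨p, (Nat.card N).factorization p, hp.prime, hpos, hcard⟩
end

section
/- Let $p$ be a prime and let $G\le S_p$ be a subgroup which is solvable and whose natural action on $\{1,\dots,p\}$ is primitive. Then there exists a $p$-cycle $\sigma\in S_p$ such that $G$ is contained in the normalizer $N_{S_p}(\langle\sigma\rangle)$ of the cyclic subgroup generated by $\sigma$. -/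
open MulAction Subgroup

theorem Subgroup.IsPrimitivePerm.isPreprimitive {n : ℕ} {G : Subgroup (Equiv.Perm (Fin n))}
    (hG : G.IsPrimitivePerm) : IsPreprimitive G (Fin n) :=
  { hG.1 with isTrivialBlock_of_isBlock := hG.2 _ }

theorem Group.IsSolvable.exists_normal_isMulCommutative_ne_bot (G : Type*) [Group G]
    [Group.IsSolvable G] [Nontrivial G] :
    ∃ N : Subgroup G, N.Normal ∧ IsMulCommutative N ∧ N ≠ ⊥ := by
  classical
  have hex : ∃ n, derivedSeries G (n + 1) = ⊥ := by
    obtain ⟨n, hn⟩ := IsSolvable.solvable (G := G)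
    exact ⟨n, le_bot_iff.mp (hn ▸ derivedSeries_antitone G n.le_succ)⟩
  refine ⟨derivedSeries G (Nat.find hex), derivedSeries_normal G _, ?_, ?_⟩
  · rw [← commutator_self_eq_bot_iff, ← derivedSeries_succ]
    exact Nat.find_spec hex
  · cases hk : Nat.find hex with
    | zero => simpa only [derivedSeries_zero] using top_ne_bot
    | succ j => exact Nat.find_min hex (hk ▸ j.lt_succ_self)

section Action

variable {M X : Type*} [Group M] [MulAction M X]

theorem MulAction.IsPretransitive.nontrivial [IsPretransitive M X] [Nontrivial X] :
    Nontrivial M := by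
  obtain ⟨x, y, hxy⟩ := exists_pair_ne X
  obtain ⟨g, rfl⟩ := MulAction.exists_smul_eq M x y
  exact nontrivial_of_ne g 1 (by rintro rfl; exact hxy (one_smul M x).symm)

variable [FaithfulSMul M X]

theorem MulAction.fixedPoints_ne_univ_of_ne_bot {N : Subgroup M} (hN : N ≠ ⊥) :
    fixedPoints N X ≠ Set.univ := by
  contrapose! hN
  refine (eq_bot_iff_forall N).mpr fun g hg => eq_of_smul_eq_smul (α := X) fun x => ?_
  rw [one_smul]
  exact (Set.eq_univ_iff_forall.mp hN x) ⟨g, hg⟩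

variable [IsMulCommutative M] [IsPretransitive M X]

theorem MulAction.stabilizer_eq_bot_of_isMulCommutative (a : X) : stabilizer M a = ⊥ := by
  refine (eq_bot_iff_forall _).mpr fun g hg => eq_of_smul_eq_smul (α := X) fun x => ?_
  obtain ⟨h, rfl⟩ := exists_smul_eq M a x
  rw [one_smul, smul_smul, mul_comm' g h, mul_smul, mem_stabilizer_iff.mp hg]

theorem MulAction.card_eq_card_of_isMulCommutative [Nonempty X] : Nat.card M = Nat.card X := by
  obtain ⟨a⟩ := ‹Nonempty X›
  rw [← index_stabilizer_of_transitive M a, stabilizer_eq_bot_of_isMulCommutative, index_bot]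

end Action

theorem Subgroup.le_normalizer_map_subtype {G : Type*} [Group G] {K : Subgroup G}
    (N : Subgroup K) [N.Normal] : K ≤ normalizer (N.map K.subtype : Set G) :=
  calc K = (⊤ : Subgroup K).map K.subtype := by rw [← MonoidHom.range_eq_map, range_subtype]
    _ = (normalizer (N : Set K)).map K.subtype := by rw [normalizer_eq_top]
    _ ≤ normalizer (N.map K.subtype : Set G) := le_normalizer_map _

theorem Equiv.Perm.exists_isCycle_zpowers_eq_of_card_eq {α : Type*} [Fintype α] [DecidableEq α]
    (hα : (Fintype.card α).Prime) {K : Subgroup (Equiv.Perm α)}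
    (hK : Nat.card K = Fintype.card α) :
    ∃ σ : Equiv.Perm α, σ.IsCycle ∧ σ.support.card = Fintype.card α ∧ zpowers σ = K := by
  have := Fact.mk hα
  obtain ⟨σ, rfl⟩ := K.isCyclic_iff_exists_zpowers_eq_top.mp (isCyclic_of_prime_card hK)
  have hσ : orderOf σ = Fintype.card α := by rw [← Nat.card_zpowers, hK]
  have hcycle := isCycle_of_prime_order'' hα hσ
  exact ⟨σ, hcycle, hcycle.orderOf ▸ hσ, rfl⟩

/-- A solvable primitive subgroup of `S_p` (`p` prime) is contained in the normalizer
of the cyclic subgroup generated by some `p`-cycle. -/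
theorem solvable_primitive_le_normalizer_of_prime (p : ℕ) (hp : p.Prime)
    (G : Subgroup (Equiv.Perm (Fin p))) (hsolv : IsSolvable G)
    (hprim : G.IsPrimitivePerm) :
    ∃ σ : Equiv.Perm (Fin p), σ.IsCycle ∧ σ.support.card = p ∧
      G ≤ Subgroup.normalizer (Subgroup.zpowers σ) := by
  have : Group.IsSolvable G := hsolv
  have := hprim.isPreprimitive
  have : Nontrivial (Fin p) := Fin.nontrivial_iff_two_le.mpr hp.two_le
  have : Nontrivial G := IsPretransitive.nontrivial (X := Fin p)
  obtain ⟨N, hN, hNcomm, hNbot⟩ := Group.IsSolvable.exists_normal_isMulCommutative_ne_bot G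
  have : IsPretransitive N (Fin p) :=
    IsQuasiPreprimitive.isPretransitive_of_normal (fixedPoints_ne_univ_of_ne_bot hNbot)
  have hcard : Nat.card (N.map G.subtype) = Fintype.card (Fin p) := by
    rw [card_map_of_injective G.subtype_injective, card_eq_card_of_isMulCommutative (X := Fin p),
      Nat.card_eq_fintype_card]
  obtain ⟨σ, hcycle, hsupport, hσ⟩ :=
    Equiv.Perm.exists_isCycle_zpowers_eq_of_card_eq (by rwa [Fintype.card_fin]) hcard
  exact ⟨σ, hcycle, by rwa [Fintype.card_fin] at hsupport, hσ ▸ le_normalizer_map_subtype N⟩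
end

section
/- Let $p$ be a prime, let $\sigma\in S_p$ be a $p$-cycle, and let $\tau$ be an element of the normalizer $N_{S_p}(\langle\sigma\rangle)$. Then exactly one of the following holds: $\tau$ is the identity; $\tau$ is a $p$-cycle; or there exists a divisor $d$ of $p-1$ with $d\ge 2$ such that $\tau$ has exactly one fixed point and its cycle decomposition consists of that fixed point together with $(p-1)/d$ cycles each of length $d$. -/
/-!
Conjugation by `τ` sends `σ` to some `σ ^ b`; numbering the points as `σ ^ k x₀`, `τ` acts as the
affine map `k ↦ b * k + c` of `ZMod p`. If `b = 1`, `τ` commutes with `σ`, so it is a power of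
`σ`: trivial or, as `p` is prime, a `p`-cycle. Otherwise the affine map has exactly one fixed
point. The same dichotomy applies to every power `τ ^ m`, and a power of `σ` that fixes a point is
trivial; so every point moved by `τ` has orbit length `orderOf τ`, all cycles of `τ` have that
length `d`, and counting the `p - 1` moved points gives `d ∣ p - 1`.
-/

open Finset

namespace Equiv.Perm

theorem apply_pow_apply_of_conj_eq_pow {β : Type*} {σ ρ : Perm β} {b : ℕ}
    (hρ : ρ * σ * ρ⁻¹ = σ ^ b) (k : ℕ) (x : β) : ρ ((σ ^ k) x) = (σ ^ (b * k)) (ρ x) := by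
  rw [pow_mul, ← hρ, conj_pow]
  simp

variable {α : Type*} [Fintype α] [DecidableEq α]

theorem card_fixed_add_card_support (ρ : Perm α) :
    #{x | ρ x = x} + #ρ.support = Fintype.card α :=
  card_filter_add_card_filter_not _

theorem eq_orderOf_of_mem_cycleType {τ : Perm α}
    (h : ∀ (m : ℕ) (y : α), τ y ≠ y → (τ ^ m) y = y → τ ^ m = 1) :
    ∀ ℓ ∈ τ.cycleType, ℓ = orderOf τ := by
  intro ℓ hℓ
  obtain ⟨c, hc, rfl⟩ := Multiset.mem_map.mp (cycleType_def τ ▸ hℓ)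
  obtain ⟨y, hy⟩ := (mem_cycleFactorsFinset_iff.mp hc).1.nonempty_support
  have hτy : τ y ≠ y := by
    rwa [← (mem_cycleFactorsFinset_iff.mp hc).2 y hy, ← mem_support]
  have hperiod : (τ ^ #c.support) y = y := by
    rw [← pow_mod_card_support_cycleOf_self_apply, ← cycle_is_cycleOf hy hc, Nat.mod_self,
      pow_zero, one_apply]
  exact Nat.dvd_antisymm (dvd_of_mem_cycleType hℓ)
    (orderOf_dvd_of_pow_eq_one (h _ y hτy hperiod))

section FullCycle

variable {σ : Perm α}

theorem IsCycle.orderOf_eq_card (hσ : σ.IsCycle) (hσs : σ.support = univ) :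
    orderOf σ = Fintype.card α := by
  rw [hσ.orderOf, hσs, card_univ]

theorem IsCycle.pow_apply_eq_pow_apply_iff (hσ : σ.IsCycle) (hσs : σ.support = univ) (x : α)
    {i j : ℕ} : (σ ^ i) x = (σ ^ j) x ↔ (i : ZMod (Fintype.card α)) = j := by
  rw [ZMod.natCast_eq_natCast_iff, ← hσ.orderOf_eq_card hσs, ← pow_eq_pow_iff_modEq]
  exact ⟨fun h => hσ.pow_eq_pow_iff.mpr ⟨x, mem_support.mp (hσs ▸ mem_univ x), h⟩,
    fun h => by rw [h]⟩

theorem IsCycle.eq_one_of_mem_zpowers_of_apply_eq_self (hσ : σ.IsCycle)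
    (hσs : σ.support = univ) {ρ : Perm α} (hρ : ρ ∈ Subgroup.zpowers σ) {x : α}
    (hx : ρ x = x) : ρ = 1 := by
  obtain ⟨n, rfl⟩ := mem_powers_iff_mem_zpowers.mpr hρ
  exact (hσ.pow_eq_one_iff' (mem_support.mp (hσs ▸ mem_univ x))).mpr hx

theorem IsCycle.mem_zpowers_of_commute (hσ : σ.IsCycle) (hσs : σ.support = univ)
    {ρ : Perm α} (h : Commute ρ σ) : ρ ∈ Subgroup.zpowers σ := by
  obtain ⟨hρ, hmem⟩ := hσ.commute_iff.mp h
  rwa [ofSubtype_subtypePerm hρ fun x _ => hσs ▸ mem_univ x] at hmem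

theorem IsCycle.isCycle_of_mem_zpowers (hp : (Fintype.card α).Prime) (hσ : σ.IsCycle)
    (hσs : σ.support = univ) {ρ : Perm α} (hρ : ρ ∈ Subgroup.zpowers σ) (hρ1 : ρ ≠ 1) :
    ρ.IsCycle := by
  obtain ⟨n, rfl⟩ := mem_powers_iff_mem_zpowers.mpr hρ
  rw [hσ.pow_iff, hσ.orderOf_eq_card hσs, Nat.coprime_comm, hp.coprime_iff_not_dvd,
    ← hσ.orderOf_eq_card hσs, orderOf_dvd_iff_pow_eq_one]
  exact hρ1

theorem IsCycle.support_eq_univ_of_mem_zpowers (hσ : σ.IsCycle) (hσs : σ.support = univ)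
    {ρ : Perm α} (hρ : ρ ∈ Subgroup.zpowers σ) (hρ1 : ρ ≠ 1) : ρ.support = univ :=
  eq_univ_of_forall fun _ => mem_support.mpr fun hx =>
    hρ1 (hσ.eq_one_of_mem_zpowers_of_apply_eq_self hσs hρ hx)

theorem IsCycle.card_fixed_eq_one_of_conj_eq_pow (hσ : σ.IsCycle) (hσs : σ.support = univ)
    {ρ : Perm α} {b : ℕ} (hρ : ρ * σ * ρ⁻¹ = σ ^ b)
    (hb : IsUnit (1 - (b : ZMod (Fintype.card α)))) : #{x | ρ x = x} = 1 := by
  have hmove : ∀ x, σ x ≠ x := fun x => mem_support.mp (hσs ▸ mem_univ x)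
  have hiff := hσ.pow_apply_eq_pow_apply_iff hσs
  obtain ⟨x₀, -⟩ := id hσ
  have : NeZero (Fintype.card α) := ⟨(Fintype.card_pos_iff.mpr ⟨x₀⟩).ne'⟩
  obtain ⟨u, hu⟩ := hb
  obtain ⟨c, hc⟩ := hσ.exists_pow_eq (hmove x₀) (hmove (ρ x₀))
  obtain ⟨k, hk⟩ := ZMod.natCast_zmod_surjective (u⁻¹ * c : ZMod (Fintype.card α))
  have hfixed : ρ ((σ ^ k) x₀) = (σ ^ k) x₀ := by
    rw [apply_pow_apply_of_conj_eq_pow hρ, ← hc, ← mul_apply, ← pow_add, hiff]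
    have : (1 - (b : ZMod (Fintype.card α))) * k = c := by
      rw [hk, ← hu, Units.mul_inv_cancel_left]
    push_cast
    linear_combination -this
  have hunique : ∀ x y, ρ x = x → ρ y = y → y = x := by
    intro x y hx hy
    obtain ⟨j, rfl⟩ := hσ.exists_pow_eq (hmove x) (hmove y)
    rw [apply_pow_apply_of_conj_eq_pow hρ, hx, hiff] at hy
    have hj : (u : ZMod (Fintype.card α)) * j = 0 := by
      rw [hu]
      push_cast at hy
      linear_combination -hy
    rw [Units.mul_right_eq_zero] at hj
    simpa using (hiff x (j := 0)).mpr (by simpa using hj)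
  exact card_eq_one.mpr ⟨_, eq_singleton_iff_unique_mem.mpr
    ⟨by simpa using hfixed, fun y hy => hunique _ y hfixed (by simpa using hy)⟩⟩

theorem IsCycle.mem_zpowers_or_card_fixed_eq_one (hp : (Fintype.card α).Prime)
    (hσ : σ.IsCycle) (hσs : σ.support = univ) {ρ : Perm α}
    (hρ : ρ ∈ Subgroup.normalizer (Subgroup.zpowers σ)) :
    ρ ∈ Subgroup.zpowers σ ∨ #{x | ρ x = x} = 1 := by
  have : Fact (Fintype.card α).Prime := ⟨hp⟩
  obtain ⟨b, hb⟩ : ∃ b : ℕ, σ ^ b = ρ * σ * ρ⁻¹ := mem_powers_iff_mem_zpowers.mpr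
    ((Subgroup.mem_normalizer_iff.mp hρ σ).mp (Subgroup.mem_zpowers σ))
  by_cases hb1 : (b : ZMod (Fintype.card α)) = 1
  · have hσb : σ ^ b = σ := ext fun x => by
      simpa using (hσ.pow_apply_eq_pow_apply_iff hσs x (j := 1)).mpr (by simpa using hb1)
    exact Or.inl (hσ.mem_zpowers_of_commute hσs (mul_inv_eq_iff_eq_mul.mp (hb.symm.trans hσb)))
  · exact Or.inr (hσ.card_fixed_eq_one_of_conj_eq_pow hσs hb.symm
      (sub_ne_zero.mpr (Ne.symm hb1)).isUnit)

theorem IsCycle.pow_eq_one_of_pow_apply_eq_self (hp : (Fintype.card α).Prime)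
    (hσ : σ.IsCycle) (hσs : σ.support = univ) {ρ : Perm α}
    (hρ : ρ ∈ Subgroup.normalizer (Subgroup.zpowers σ)) (hfix : #{x | ρ x = x} = 1) (m : ℕ)
    {y : α} (hy : ρ y ≠ y) (hmy : (ρ ^ m) y = y) : ρ ^ m = 1 := by
  obtain ⟨x₀, hx₀⟩ := card_eq_one.mp hfix
  have hρx₀ : ρ x₀ = x₀ := by simpa using hx₀.ge (mem_singleton_self x₀)
  have hmx₀ := pow_apply_eq_self_of_apply_eq_self hρx₀ m
  rcases hσ.mem_zpowers_or_card_fixed_eq_one hp hσs (pow_mem hρ m) with hz | hfix'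
  · exact hσ.eq_one_of_mem_zpowers_of_apply_eq_self hσs hz hmx₀
  · have hyx₀ : y = x₀ :=
      card_le_one.mp hfix'.le y (by simpa using hmy) x₀ (by simpa using hmx₀)
    exact absurd (hyx₀ ▸ hρx₀) hy

theorem IsCycle.cycleType_eq_replicate_of_card_fixed_eq_one (hp : (Fintype.card α).Prime)
    (hσ : σ.IsCycle) (hσs : σ.support = univ) {ρ : Perm α}
    (hρ : ρ ∈ Subgroup.normalizer (Subgroup.zpowers σ)) (hfix : #{x | ρ x = x} = 1) :
    ∃ d, d ∣ Fintype.card α - 1 ∧ 2 ≤ d ∧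
      ρ.cycleType = Multiset.replicate ((Fintype.card α - 1) / d) d := by
  have hrep : ρ.cycleType = Multiset.replicate (Multiset.card ρ.cycleType) (orderOf ρ) :=
    Multiset.eq_replicate_card.mpr (eq_orderOf_of_mem_cycleType fun m _ =>
      hσ.pow_eq_one_of_pow_apply_eq_self hp hσs hρ hfix m)
  have hsum : Multiset.card ρ.cycleType * orderOf ρ = Fintype.card α - 1 := by
    have hcount := card_fixed_add_card_support ρ
    have := congrArg Multiset.sum hrep
    rw [sum_cycleType, Multiset.sum_replicate, smul_eq_mul] at this
    omega
  have hd0 : orderOf ρ ≠ 0 := (orderOf_pos ρ).ne'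
  have hd1 : orderOf ρ ≠ 1 := fun h => by
    rw [orderOf_eq_one_iff] at h
    subst h
    have := hp.two_le
    simp at hsum
    omega
  refine ⟨orderOf ρ, Dvd.intro_left _ hsum, by omega, ?_⟩
  rwa [← hsum, Nat.mul_div_cancel _ (orderOf_pos ρ)]

end FullCycle

end Equiv.Perm

/-- Let `p` be a prime, `σ ∈ S_p` a `p`-cycle and `τ` an element of the normalizer
`N_{S_p}(⟨σ⟩)`. Then exactly one of the following holds: `τ` is the identity; `τ` is a
`p`-cycle; or there is a divisor `d ≥ 2` of `p - 1` such that `τ` has exactly one fixed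
point and its cycle decomposition consists of `(p-1)/d` cycles of length `d`. -/
theorem normalizer_element_trichotomy (p : ℕ) (hp : p.Prime)
    (σ τ : Equiv.Perm (Fin p)) (hσ : σ.IsCycle) (hσcard : σ.support.card = p)
    (hτ : τ ∈ Subgroup.normalizer (Subgroup.zpowers σ)) :
    (τ = 1 ∧
      ¬ (τ.IsCycle ∧ τ.support.card = p) ∧
      ¬ (∃ d : ℕ, d ∣ p - 1 ∧ 2 ≤ d ∧
          (Finset.univ.filter fun x => τ x = x).card = 1 ∧
          τ.cycleType = Multiset.replicate ((p - 1) / d) d)) ∨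
    (τ ≠ 1 ∧
      (τ.IsCycle ∧ τ.support.card = p) ∧
      ¬ (∃ d : ℕ, d ∣ p - 1 ∧ 2 ≤ d ∧
          (Finset.univ.filter fun x => τ x = x).card = 1 ∧
          τ.cycleType = Multiset.replicate ((p - 1) / d) d)) ∨
    (τ ≠ 1 ∧
      ¬ (τ.IsCycle ∧ τ.support.card = p) ∧
      (∃ d : ℕ, d ∣ p - 1 ∧ 2 ≤ d ∧
          (Finset.univ.filter fun x => τ x = x).card = 1 ∧
          τ.cycleType = Multiset.replicate ((p - 1) / d) d)) := by
  have hσs : σ.support = Finset.univ := Finset.eq_univ_of_card _ (by simpa using hσcard)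
  have hpα : (Fintype.card (Fin p)).Prime := by rwa [Fintype.card_fin]
  have hcount := Equiv.Perm.card_fixed_add_card_support τ
  rw [Fintype.card_fin] at hcount
  have hp2 := hp.two_le
  rcases hσ.mem_zpowers_or_card_fixed_eq_one hpα hσs hτ with hz | hfix
  · by_cases hτ1 : τ = 1
    · subst hτ1
      refine Or.inl ⟨rfl, fun h => h.1.ne_one rfl, fun ⟨_, _, _, hfix, _⟩ => ?_⟩
      simp at hfix
      omega
    · have hsupp : τ.support.card = p := by
        simp [hσ.support_eq_univ_of_mem_zpowers hσs hz hτ1]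
      exact Or.inr (Or.inl ⟨hτ1, ⟨hσ.isCycle_of_mem_zpowers hpα hσs hz hτ1, hsupp⟩,
        fun ⟨_, _, _, hfix, _⟩ => by omega⟩)
  · obtain ⟨d, hd, hd2, hcyc⟩ := hσ.cycleType_eq_replicate_of_card_fixed_eq_one hpα hσs hτ hfix
    rw [Fintype.card_fin] at hd hcyc
    refine Or.inr (Or.inr ⟨?_, fun h => by omega, d, hd, hd2, hfix, hcyc⟩)
    rintro rfl
    simp at hfix
    omega
end

section
/- Let $p\ge 7$ be a prime and let $n\ge p$. Then the proportion of permutations $\tau\in S_n$ with the property that there exists a divisor $d$ of $p-1$ such that the cycle decomposition of $\tau$ contains at least $(p-1)/d$ cycles of length $d$ is at most $\sum_{a=1}^{\infty} \left(\frac{e}{p-1}\right)^a = \frac{e}{p-1-e}$. -/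
/-!
Double counting. Call an embedding `g : Fin k × Fin d ↪ Fin n` a labelling of `τ` if it lists
`k` disjoint `d`-cycles of `τ`. A permutation with at least `k` cycles of length `d` has at least
`k! d^k` labellings (reorder the cycles and rotate each of them), while a fixed `g` is a labelling
of at most `(n - kd)!` permutations, since `g` prescribes `τ` on its image. So at most a
proportion `1 / (k! d^k) ≤ (e / (kd))^k` of `Sₙ` has `k` cycles of length `d`. Taking
`kd = p - 1`, the union bound over the divisors `d` of `p - 1` gives
`∑_{d ∣ p-1} (e/(p-1))^((p-1)/d) = ∑_{d ∣ p-1} (e/(p-1))^d`, part of the geometric series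
`∑_{a ≥ 1} (e/(p-1))^a`.
-/

open Finset MulAction
open scoped Nat
open Real

namespace Equiv.Perm

section Period

variable {α : Type*} {τ : Perm α} {x : α}

theorem IsCycleOn.period_eq {s : Finset α} (hτ : τ.IsCycleOn s) (hx : x ∈ s) :
    period τ x = #s :=
  Nat.dvd_antisymm (pow_smul_eq_iff_period_dvd.1 ((hτ.pow_apply_eq hx).2 dvd_rfl))
    ((hτ.pow_apply_eq hx).1 (pow_period_smul τ x))

theorem eq_of_pow_apply_eq_of_lt_period {j j' : ℕ} (hj : j < period τ x)
    (hj' : j' < period τ x) (h : (τ ^ j) x = (τ ^ j') x) : j = j' := by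
  wlog hle : j ≤ j' generalizing j j'
  · exact (this hj' hj h.symm (by omega)).symm
  have hfix : τ ^ (j' - j) • x = x := by
    apply (τ ^ j).injective
    rw [Perm.smul_def, ← mul_apply, ← pow_add, Nat.add_sub_cancel' hle, h]
  by_contra hne
  exact pow_smul_ne_of_lt_period (by omega) (by omega) hfix

end Period

section Points

variable {α : Type*} [Fintype α] [DecidableEq α] {τ : Perm α} {k d : ℕ}

theorem exists_period_eq_one_of_le_card_fixed (h : k ≤ #{x | τ x = x}) :
    ∃ x : Fin k → α, (∀ i, period τ (x i) = 1) ∧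
      ∀ i i', τ.SameCycle (x i) (x i') → i = i' := by
  obtain ⟨e⟩ := Function.Embedding.nonempty_of_card_le
    (show Fintype.card (Fin k) ≤ Fintype.card {x // τ x = x} by
      rwa [Fintype.card_fin, Fintype.card_subtype])
  refine ⟨fun i => e i, fun i => period_eq_one_iff.2 (e i).2, fun i i' h => ?_⟩
  exact e.injective (Subtype.ext (h.eq_of_left (e i).2))

theorem exists_period_eq_of_le_count_cycleType (h : k ≤ τ.cycleType.count d) :
    ∃ x : Fin k → α, (∀ i, period τ (x i) = d) ∧
      ∀ i i', τ.SameCycle (x i) (x i') → i = i' := by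
  rw [CycleType.count_def] at h
  obtain ⟨e⟩ : Nonempty (Fin k ↪ {c : τ.cycleFactorsFinset // #(c : Perm α).support = d}) :=
    Function.Embedding.nonempty_of_card_le (by rwa [Fintype.card_fin])
  have hcycle : ∀ i, (e i : Perm α).IsCycle := fun i =>
    (mem_cycleFactorsFinset_iff.1 (e i).1.2).1
  choose x hx using fun i => (hcycle i).nonempty_support
  have hcycleOf : ∀ i, (e i : Perm α) = τ.cycleOf (x i) := fun i =>
    cycle_is_cycleOf (hx i) (e i).1.2
  refine ⟨x, fun i => ?_, fun i i' hsame => e.injective (Subtype.ext (Subtype.ext ?_))⟩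
  · rw [← (e i).2, hcycleOf i]
    exact (τ.isCycleOn_support_cycleOf (x i)).period_eq (hcycleOf i ▸ hx i)
  · rw [hcycleOf i, hcycleOf i', hsame.cycleOf_eq]

end Points

section Labelling

variable {α : Type*} {k d : ℕ} [NeZero d]

/-- `g` lists `k` disjoint `d`-cycles of `τ`: `g (i, j)` is the `j`-th point of the `i`-th one. -/
def IsCycleLabelling (τ : Perm α) (g : Fin k × Fin d ↪ α) : Prop :=
  ∀ i j, τ (g (i, j)) = g (i, j + 1)

theorem exists_isCycleLabelling_of_period_eq {τ : Perm α} (x : Fin k → α)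
    (hx : ∀ i, period τ (x i) = d) (hdisj : ∀ i i', τ.SameCycle (x i) (x i') → i = i') :
    ∃ g : Fin k × Fin d ↪ α, τ.IsCycleLabelling g := by
  refine ⟨⟨fun q => (τ ^ (q.2 : ℕ)) (x q.1), ?_⟩, fun i j => ?_⟩
  · rintro ⟨i, j⟩ ⟨i', j'⟩ h
    dsimp only at h
    have hsame : τ.SameCycle ((τ ^ (j : ℕ)) (x i)) ((τ ^ (j' : ℕ)) (x i')) := h ▸ .refl _ _
    obtain rfl := hdisj i i' (sameCycle_pow_left.1 (sameCycle_pow_right.1 hsame))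
    obtain rfl := Fin.ext (eq_of_pow_apply_eq_of_lt_period (hx i ▸ j.2) (hx i ▸ j'.2) h)
    rfl
  · have hmod := pow_mod_period_smul ((j : ℕ) + 1) (m := τ) (a := x i)
    rw [hx i, Perm.smul_def, Perm.smul_def] at hmod
    show τ ((τ ^ (j : ℕ)) (x i)) = (τ ^ ((j + 1 : Fin d) : ℕ)) (x i)
    rw [Fin.val_add, Fin.val_one', Nat.add_mod_mod, hmod, pow_succ', mul_apply]

variable [Fintype α] [DecidableEq α]

instance (τ : Perm α) (g : Fin k × Fin d ↪ α) : Decidable (τ.IsCycleLabelling g) :=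
  by unfold IsCycleLabelling; infer_instance

theorem card_isCycleLabelling_le (g : Fin k × Fin d ↪ α) :
    #{τ : Perm α | τ.IsCycleLabelling g} ≤ (Fintype.card α - k * d)! := by
  rcases eq_empty_or_nonempty {τ : Perm α | τ.IsCycleLabelling g} with h | ⟨τ₀, hmem⟩
  · simp [h]
  set S : Finset α := univ.map g
  have hτ₀ : τ₀.IsCycleLabelling g := (mem_filter.1 hmem).2
  -- `τ ↦ τ₀⁻¹ * τ` maps these permutations into those fixing the image of `g` pointwise.
  calc #{τ : Perm α | τ.IsCycleLabelling g}
      ≤ #{f : Perm α | ∀ a, ¬a ∉ S → f a = a} := by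
        refine card_le_card_of_injOn (τ₀⁻¹ * ·) ?_ (mul_right_injective _).injOn
        intro τ hτ
        simp only [coe_filter, Set.mem_ofPred_eq, mem_univ, true_and] at hτ ⊢
        rintro _ ha
        obtain ⟨⟨i, j⟩, -, rfl⟩ := mem_map.1 (not_not.1 ha)
        rw [mul_apply, hτ, ← hτ₀]
        exact τ₀.symm_apply_apply _
    _ = (Fintype.card α - k * d)! := by
        rw [← Fintype.card_subtype, ← Fintype.card_congr (Perm.subtypeEquivSubtypePerm _),
          Fintype.card_perm, Fintype.card_subtype_compl, Fintype.card_coe, card_map, card_univ,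
          Fintype.card_prod, Fintype.card_fin, Fintype.card_fin]

theorem IsCycleLabelling.le_card {τ : Perm α} {y : Fin k × Fin d ↪ α}
    (hy : τ.IsCycleLabelling y) :
    k ! * d ^ k ≤ #{g : Fin k × Fin d ↪ α | τ.IsCycleLabelling g} := by
  let Φ : Perm (Fin k) × (Fin k → Fin d) → (Fin k × Fin d ↪ α) := fun z =>
    (prodShear z.1 fun i => Equiv.addLeft (z.2 i)).toEmbedding.trans y
  have hΦ : ∀ z, τ.IsCycleLabelling (Φ z) := fun z i j => by
    simp [Φ, hy _ _, add_assoc]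
  have hinj : Function.Injective Φ := by
    rintro ⟨σ, r⟩ ⟨σ', r'⟩ h
    have := fun i => y.injective (DFunLike.congr_fun h (i, 0))
    simp only [Equiv.coe_toEmbedding, prodShear_apply, coe_addLeft, add_zero, Prod.mk.injEq] at this
    exact Prod.ext (Equiv.ext fun i => (this i).1) (funext fun i => (this i).2)
  calc k ! * d ^ k = Fintype.card (Perm (Fin k) × (Fin k → Fin d)) := by
        simp [Fintype.card_perm]
    _ ≤ _ := card_le_card_of_injOn Φ (fun z _ => by simpa using hΦ z) hinj.injOn

theorem card_mul_le_factorial_of_isCycleLabelling (s : Finset (Perm α))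
    (hs : ∀ τ ∈ s, ∃ g : Fin k × Fin d ↪ α, τ.IsCycleLabelling g) :
    #s * (k ! * d ^ k) ≤ (Fintype.card α)! := by
  calc #s * (k ! * d ^ k)
      ≤ #(univ : Finset (Fin k × Fin d ↪ α)) * (Fintype.card α - k * d)! := by
        refine card_mul_le_card_mul (fun τ g => τ.IsCycleLabelling g)
          (fun τ hτ => ?_) (fun g _ => ?_)
        · obtain ⟨_, hg⟩ := hs τ hτ
          exact hg.le_card
        · exact (card_le_card (filter_subset_filter _ (subset_univ s))).trans
            (card_isCycleLabelling_le g)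
    _ ≤ (Fintype.card α)! := by
        rw [card_univ, Fintype.card_embedding_eq, Fintype.card_prod, Fintype.card_fin,
          Fintype.card_fin]
        rcases le_or_gt (k * d) (Fintype.card α) with h | h
        · rw [mul_comm, Nat.factorial_mul_descFactorial h]
        · simp [Nat.descFactorial_eq_zero_iff_lt.2 h]

end Labelling

end Equiv.Perm

open Equiv Perm

theorem card_le_cycleCount_mul_le_factorial (n k d : ℕ) [NeZero d] :
    #{τ : Perm (Fin n) | k ≤ cycleCount τ d} * (k ! * d ^ k) ≤ n ! := by
  simpa using card_mul_le_factorial_of_isCycleLabelling (k := k) (d := d)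
      {τ : Perm (Fin n) | k ≤ cycleCount τ d} fun τ hτ => by
    obtain ⟨x, hx, hdisj⟩ : ∃ x : Fin k → Fin n,
        (∀ i, period τ (x i) = d) ∧ ∀ i i', τ.SameCycle (x i) (x i') → i = i' := by
      rw [mem_filter, cycleCount] at hτ
      split_ifs at hτ with hd
      · exact hd ▸ exists_period_eq_one_of_le_card_fixed hτ.2
      · exact exists_period_eq_of_le_count_cycleType hτ.2
    exact exists_isCycleLabelling_of_period_eq x hx hdisj

theorem one_div_factorial_mul_pow_le (k d : ℕ) :
    1 / (k ! * d ^ k : ℝ) ≤ (exp 1 / (k * d)) ^ k := by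
  have hkk : (k : ℝ) ^ k / k ! ≤ exp 1 ^ k := by
    rw [← exp_nat_mul, mul_one]
    exact pow_div_factorial_le_exp _ (Nat.cast_nonneg k) k
  have hk : (0 : ℝ) < k ^ k := by exact_mod_cast Nat.pow_self_pos
  calc 1 / (k ! * d ^ k : ℝ) = (k ^ k / k !) / (k ^ k * d ^ k) := by field_simp
    _ ≤ exp 1 ^ k / (k ^ k * d ^ k) := by gcongr
    _ = (exp 1 / (k * d)) ^ k := by rw [div_pow, mul_pow]

theorem card_le_cycleCount_div_factorial_le (n : ℕ) {m d : ℕ} (hd : d ∈ m.divisors) :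
    (#{τ : Perm (Fin n) | m / d ≤ cycleCount τ d} : ℝ) / n ! ≤ (exp 1 / m) ^ (m / d) := by
  have hdm : d ∣ m := Nat.dvd_of_mem_divisors hd
  have : NeZero d := ⟨(Nat.pos_of_mem_divisors hd).ne'⟩
  have hd0 : (0 : ℝ) < d := by exact_mod_cast Nat.pos_of_mem_divisors hd
  have hcount : (#{τ : Perm (Fin n) | m / d ≤ cycleCount τ d} : ℝ) * ((m / d) ! * d ^ (m / d))
      ≤ n ! := by exact_mod_cast card_le_cycleCount_mul_le_factorial n (m / d) d
  calc (#{τ : Perm (Fin n) | m / d ≤ cycleCount τ d} : ℝ) / n !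
      ≤ 1 / ((m / d) ! * d ^ (m / d) : ℝ) := by
        rw [div_le_div_iff₀ (by positivity) (by positivity)]
        linarith
    _ ≤ (exp 1 / ((m / d : ℕ) * d)) ^ (m / d) := one_div_factorial_mul_pow_le _ _
    _ = (exp 1 / m) ^ (m / d) := by rw [← Nat.cast_mul, Nat.div_mul_cancel hdm]

theorem sum_divisors_pow_le (m : ℕ) {x : ℝ} (hx0 : 0 ≤ x) (hx1 : x < 1) :
    ∑ d ∈ m.divisors, x ^ d ≤ x / (1 - x) := by
  calc ∑ d ∈ m.divisors, x ^ d ≤ ∑ d ∈ Ico 1 (m + 1), x ^ d :=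
        sum_le_sum_of_subset_of_nonneg (filter_subset _ _) fun _ _ _ => pow_nonneg hx0 _
    _ ≤ x ^ 1 / (1 - x) := geom_sum_Ico_le_of_lt_one hx0 hx1
    _ = x / (1 - x) := by rw [pow_one]

theorem card_exists_le_cycleCount_le_sum_divisors (n : ℕ) {m : ℕ} (hm : m ≠ 0) :
    Nat.card {τ : Perm (Fin n) // ∃ d, d ∣ m ∧ m / d ≤ cycleCount τ d}
      ≤ ∑ d ∈ m.divisors, #{τ : Perm (Fin n) | m / d ≤ cycleCount τ d} := by
  classical
  rw [Nat.card_eq_fintype_card, Fintype.card_subtype]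
  refine (card_le_card fun τ hτ => ?_).trans card_biUnion_le
  obtain ⟨d, hdm, hd⟩ := (mem_filter.1 hτ).2
  exact mem_biUnion.2 ⟨d, Nat.mem_divisors.2 ⟨hdm, hm⟩, mem_filter.2 ⟨mem_univ _, hd⟩⟩

theorem proportion_perms_with_agl_pattern_le_general (p n : ℕ) (hp7 : 7 ≤ p) :
    (Nat.card {τ : Equiv.Perm (Fin n) //
        ∃ d : ℕ, d ∣ p - 1 ∧ (p - 1) / d ≤ cycleCount τ d} : ℝ) / (n.factorial : ℝ)
      ≤ Real.exp 1 / ((p : ℝ) - 1 - Real.exp 1) := by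
  set m := p - 1
  have hm : (m : ℝ) = p - 1 := by rw [Nat.cast_sub (by omega), Nat.cast_one]
  have hp : (7 : ℝ) ≤ p := by exact_mod_cast hp7
  have hm0 : (m : ℝ) ≠ 0 := by linarith
  have hx1 : exp 1 / m < 1 := (div_lt_one (by linarith)).2 (by linarith [exp_one_lt_d9])
  calc _ ≤ ∑ d ∈ m.divisors,
          (#{τ : Perm (Fin n) | m / d ≤ cycleCount τ d} : ℝ) / n ! := by
        rw [← sum_div]
        gcongr
        exact_mod_cast card_exists_le_cycleCount_le_sum_divisors n (by omega)
    _ ≤ ∑ d ∈ m.divisors, (exp 1 / m) ^ (m / d) :=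
        sum_le_sum fun d hd => card_le_cycleCount_div_factorial_le n hd
    _ = ∑ d ∈ m.divisors, (exp 1 / m) ^ d := Nat.sum_div_divisors m _
    _ ≤ exp 1 / m / (1 - exp 1 / m) := sum_divisors_pow_le m (by positivity) hx1
    _ = exp 1 / ((p : ℝ) - 1 - exp 1) := by
        rw [← hm, div_div, mul_one_sub, mul_div_cancel₀ _ hm0]

/-- For a prime `p ≥ 7` and `n ≥ p`, the proportion of `τ ∈ Sₙ` containing, for some
divisor `d` of `p - 1`, at least `(p-1)/d` cycles of length `d`, is at most
`∑_{a ≥ 1} (e/(p-1))^a = e / (p - 1 - e)`. -/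
theorem proportion_perms_with_agl_pattern_le (p n : ℕ) (hp : p.Prime) (hp7 : 7 ≤ p)
    (hn : p ≤ n) :
    (Nat.card {τ : Equiv.Perm (Fin n) //
        ∃ d : ℕ, d ∣ p - 1 ∧ (p - 1) / d ≤ cycleCount τ d} : ℝ) / (n.factorial : ℝ)
      ≤ Real.exp 1 / ((p : ℝ) - 1 - Real.exp 1) :=
  proportion_perms_with_agl_pattern_le_general p n hp7
end
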